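/- Let T > 0, C₂ ≥ 0, and for each ε ∈ (0,1) let C₁^ε ≥ 0 be constants with sup_{ε ∈ (0,1)} C₁^ε < ∞. If z : [0,T] → [0,∞) is continuous and satisfies (1/2) z(t)² ≤ (C₁^ε/ε) ∫₀ᵗ z(s)^{2−ε} ds + C₂ ∫₀ᵗ z(s)² ds for every t ∈ [0,T] and every ε ∈ (0,1), then z(t) ≤ (C₁^ε t)^{1/ε} e^{C₂ t} for all t and ε, and consequently z ≡ 0 on [0,T]. -/

import Mathlib

/-!
**Statement 17**: the Gronwall-type iteration underlying the Yudovich uniqueness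
argument.
-/

open intervalIntegral

noncomputable section

lemma gb_le {d K E x : ℝ} (hK : 0 ≤ K) (hd : 0 ≤ d) (hE : 0 ≤ E) (hx : 0 ≤ x) :
    gronwallBound d K E x ≤ (d + E * x) * Real.exp (K * x) := by
  rcases eq_or_lt_of_le hK with h | h
  · subst h
    simp [gronwallBound_K0, Real.exp_zero]
  · rw [gronwallBound_of_K_ne_0 h.ne']
    have h1 : Real.exp (K * x) - 1 ≤ K * x * Real.exp (K * x) := by
      have := Real.add_one_le_exp (-(K * x))
      have hp := Real.exp_pos (K * x)
      have : Real.exp (K * x) * (-(K * x) + 1) ≤ Real.exp (K * x) * Real.exp (-(K * x)) := by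
        nlinarith
      rw [← Real.exp_add] at this
      simp at this
      nlinarith
    have h2 : E / K * (Real.exp (K * x) - 1) ≤ E * x * Real.exp (K * x) := by
      rw [div_mul_eq_mul_div, div_le_iff₀ h]
      calc E * (Real.exp (K * x) - 1) ≤ E * (K * x * Real.exp (K * x)) :=
            mul_le_mul_of_nonneg_left h1 hE
        _ = E * x * Real.exp (K * x) * K := by ring
    nlinarith

lemma key_bound
    (T : ℝ) (hT : 0 < T) (C₂ : ℝ) (hC₂ : 0 ≤ C₂)
    (C₁ : ℝ → ℝ) (hC₁ : ∀ ε ∈ Set.Ioo (0 : ℝ) 1, 0 ≤ C₁ ε)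
    (z : ℝ → ℝ) (hzc : ContinuousOn z (Set.Icc 0 T))
    (hznn : ∀ t ∈ Set.Icc (0 : ℝ) T, 0 ≤ z t)
    (hineq : ∀ t ∈ Set.Icc (0 : ℝ) T, ∀ ε ∈ Set.Ioo (0 : ℝ) 1,
      (1 / 2) * z t ^ 2
        ≤ (C₁ ε / ε) * (∫ s in (0 : ℝ)..t, z s ^ (2 - ε))
          + C₂ * ∫ s in (0 : ℝ)..t, z s ^ 2) :
    ∀ t ∈ Set.Icc (0 : ℝ) T, ∀ ε ∈ Set.Ioo (0 : ℝ) 1,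
      z t ≤ (C₁ ε * t) ^ (1 / ε) * Real.exp (C₂ * t) := by
  intro t ht ε hε
  obtain ⟨hε0, hε1⟩ := hε
  have hC1 : 0 ≤ C₁ ε := hC₁ ε ⟨hε0, hε1⟩
  -- continuous extension of z to ℝ
  set c : ℝ → ℝ := fun s => max 0 (min s T) with hc_def
  have hc : Continuous c := continuous_const.max (continuous_id.min continuous_const)
  have hmem : ∀ s, c s ∈ Set.Icc 0 T := fun s =>
    ⟨le_max_left _ _, max_le hT.le (min_le_right _ _)⟩
  set ζ : ℝ → ℝ := fun s => z (c s) with hζdef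
  have hζc : Continuous ζ := hzc.comp_continuous hc hmem
  have hζnn : ∀ s, 0 ≤ ζ s := fun s => hznn _ (hmem s)
  have hζeq : ∀ s ∈ Set.Icc (0:ℝ) T, ζ s = z s := by
    intro s hs
    simp only [hζdef, hc_def]
    rw [min_eq_left hs.2, max_eq_right hs.1]
  set g1 : ℝ → ℝ := fun s => ζ s ^ (2 - ε) with hg1def
  set g2 : ℝ → ℝ := fun s => ζ s ^ 2 with hg2def
  have hg1c : Continuous g1 := hζc.rpow_const (fun x => Or.inr (by linarith))
  have hg2c : Continuous g2 := hζc.pow 2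
  have hg1nn : ∀ s, 0 ≤ g1 s := fun s => Real.rpow_nonneg (hζnn s) _
  have hg2nn : ∀ s, 0 ≤ g2 s := fun s => sq_nonneg _
  -- equality of integrals
  have hint : ∀ τ ∈ Set.Icc (0:ℝ) T,
      (∫ s in (0:ℝ)..τ, z s ^ (2 - ε)) = ∫ s in (0:ℝ)..τ, g1 s := by
    intro τ hτ
    apply intervalIntegral.integral_congr
    intro s hs
    rw [Set.uIcc_of_le hτ.1] at hs
    rw [hg1def]; dsimp only
    rw [hζeq s ⟨hs.1, hs.2.trans hτ.2⟩]
  have hint2 : ∀ τ ∈ Set.Icc (0:ℝ) T,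
      (∫ s in (0:ℝ)..τ, z s ^ 2) = ∫ s in (0:ℝ)..τ, g2 s := by
    intro τ hτ
    apply intervalIntegral.integral_congr
    intro s hs
    rw [Set.uIcc_of_le hτ.1] at hs
    rw [hg2def]; dsimp only
    rw [hζeq s ⟨hs.1, hs.2.trans hτ.2⟩]
  -- main estimate for each δ > 0
  set E : ℝ := C₁ ε * 2 ^ (-(ε/2)) with hEdef
  have hE : 0 ≤ E := mul_nonneg hC1 (Real.rpow_nonneg (by norm_num) _)
  have main : ∀ δ : ℝ, 0 < δ →
      z t ^ 2 ≤ 2 * ((δ ^ (ε/2) + E * t) ^ (2/ε)) * Real.exp (2 * C₂ * t) := by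
    intro δ hδ
    set y : ℝ → ℝ := fun τ =>
      C₁ ε / ε * (∫ s in (0:ℝ)..τ, g1 s) + C₂ * (∫ s in (0:ℝ)..τ, g2 s) + δ with hydef
    have hy' : ∀ τ, HasDerivAt y (C₁ ε / ε * g1 τ + C₂ * g2 τ) τ := by
      intro τ
      exact ((((hg1c.integral_hasStrictDerivAt 0 τ).hasDerivAt.const_mul _)).add
        (((hg2c.integral_hasStrictDerivAt 0 τ).hasDerivAt.const_mul _))).add_const δ
    have hyc : Continuous y := by
      rw [continuous_iff_continuousAt]; exact fun τ => (hy' τ).continuousAt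
    have hyδ : ∀ τ, 0 ≤ τ → δ ≤ y τ := by
      intro τ hτ
      have i1 : 0 ≤ ∫ s in (0:ℝ)..τ, g1 s :=
        intervalIntegral.integral_nonneg hτ (fun s _ => hg1nn s)
      have i2 : 0 ≤ ∫ s in (0:ℝ)..τ, g2 s :=
        intervalIntegral.integral_nonneg hτ (fun s _ => hg2nn s)
      have := mul_nonneg (div_nonneg hC1 hε0.le) i1
      have := mul_nonneg hC₂ i2
      simp only [hydef]; nlinarith
    have hypos : ∀ τ, 0 ≤ τ → 0 < y τ := fun τ hτ => lt_of_lt_of_le hδ (hyδ τ hτ)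
    have hzy : ∀ τ, τ ∈ Set.Icc (0:ℝ) T → ζ τ ^ 2 ≤ 2 * y τ := by
      intro τ hτ
      have h := hineq τ hτ ε ⟨hε0, hε1⟩
      rw [hint τ hτ, hint2 τ hτ] at h
      rw [hζeq τ hτ]
      simp only [hydef]; nlinarith
        -- now the Gronwall argument for u = y ^ (ε/2)
    set u : ℝ → ℝ := fun τ => y τ ^ (ε/2) with hudef
    have hKnn : 0 ≤ ε * C₂ := mul_nonneg hε0.le hC₂
    have hucont : ContinuousOn u (Set.Icc 0 T) :=
      (hyc.continuousOn).rpow_const (fun x _ => Or.inr (by positivity))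
    have hu' : ∀ τ ∈ Set.Ico (0:ℝ) T, ∀ r : ℝ,
        ((C₁ ε / ε * g1 τ + C₂ * g2 τ) * (ε/2) * y τ ^ (ε/2 - 1)) < r →
        ∃ᶠ x in nhdsWithin τ (Set.Ioi τ), (x - τ)⁻¹ * (u x - u τ) < r := by
      intro τ hτ r hr
      have hd : HasDerivWithinAt u
          ((C₁ ε / ε * g1 τ + C₂ * g2 τ) * (ε/2) * y τ ^ (ε/2 - 1)) (Set.Ici τ) τ :=
        ((hy' τ).hasDerivWithinAt).rpow_const (Or.inl (hypos τ hτ.1).ne')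
      refine (hd.liminf_right_slope_le hr).mono fun x hx => ?_
      rwa [slope_def_field, div_eq_inv_mul] at hx
    have hbound : ∀ τ ∈ Set.Ico (0:ℝ) T,
        (C₁ ε / ε * g1 τ + C₂ * g2 τ) * (ε/2) * y τ ^ (ε/2 - 1) ≤ (ε * C₂) * u τ + E := by
      intro τ hτ
      have hY : 0 < y τ := hypos τ hτ.1
      have hz2 : ζ τ ^ 2 ≤ 2 * y τ := hzy τ ⟨hτ.1, hτ.2.le⟩
      have hg1b : g1 τ ≤ 2 ^ (1 - ε/2) * y τ ^ (1 - ε/2) := by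
        have e1 : g1 τ = ((ζ τ ^ 2 : ℝ)) ^ ((2 - ε)/2) := by
          rw [hg1def]; dsimp only
          rw [← Real.rpow_natCast (ζ τ) 2, ← Real.rpow_mul (hζnn τ)]
          congr 1
          push_cast
          ring
        rw [e1]
        calc ((ζ τ ^ 2 : ℝ)) ^ ((2-ε)/2) ≤ (2 * y τ) ^ ((2-ε)/2) :=
              Real.rpow_le_rpow (sq_nonneg _) hz2 (by linarith)
          _ = 2 ^ ((2-ε)/2) * y τ ^ ((2-ε)/2) := Real.mul_rpow (by norm_num) hY.le
          _ = 2 ^ (1 - ε/2) * y τ ^ (1 - ε/2) := by rw [show (2-ε)/2 = 1 - ε/2 by ring]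
      have idA : y τ ^ (ε/2 - 1) * y τ ^ (1 - ε/2) = 1 := by
        rw [← Real.rpow_add hY]; norm_num
      have idB : y τ ^ (ε/2 - 1) * y τ = y τ ^ (ε/2) := by
        nth_rewrite 2 [← Real.rpow_one (y τ)]
        rw [← Real.rpow_add hY]; norm_num
      have idC : (2:ℝ) ^ (1 - ε/2) = 2 * 2 ^ (-(ε/2)) := by
        rw [show (1 - ε/2) = 1 + (-(ε/2)) by ring,
          Real.rpow_add (by norm_num : (0:ℝ) < 2), Real.rpow_one]
      have hYp : 0 ≤ y τ ^ (ε/2 - 1) := Real.rpow_nonneg hY.le _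
      have hg1τnn : 0 ≤ g1 τ := hg1nn τ
      have t1 : C₁ ε / ε * g1 τ * (ε/2) * y τ ^ (ε/2 - 1) ≤ E := by
        have step : C₁ ε / ε * g1 τ * (ε/2) * y τ ^ (ε/2-1)
            ≤ C₁ ε / ε * (2 ^ (1-ε/2) * y τ ^ (1-ε/2)) * (ε/2) * y τ ^ (ε/2-1) := by
          apply mul_le_mul_of_nonneg_right _ hYp
          apply mul_le_mul_of_nonneg_right _ (by positivity)
          exact mul_le_mul_of_nonneg_left hg1b (by positivity)
        calc C₁ ε / ε * g1 τ * (ε/2) * y τ ^ (ε/2-1)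
            ≤ C₁ ε / ε * (2 ^ (1-ε/2) * y τ ^ (1-ε/2)) * (ε/2) * y τ ^ (ε/2-1) := step
          _ = C₁ ε / ε * (ε/2) * 2 ^ (1-ε/2) * (y τ ^ (ε/2-1) * y τ ^ (1-ε/2)) := by ring
          _ = C₁ ε / ε * (ε/2) * (2 * 2 ^ (-(ε/2))) := by rw [idA, idC]; ring
          _ = E := by rw [hEdef]; field_simp
      have t2 : C₂ * g2 τ * (ε/2) * y τ ^ (ε/2-1) ≤ ε * C₂ * u τ := by
        have step : C₂ * g2 τ * (ε/2) * y τ ^ (ε/2-1)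
            ≤ C₂ * (2 * y τ) * (ε/2) * y τ ^ (ε/2-1) := by
          apply mul_le_mul_of_nonneg_right _ hYp
          apply mul_le_mul_of_nonneg_right _ (by positivity)
          exact mul_le_mul_of_nonneg_left hz2 hC₂
        calc C₂ * g2 τ * (ε/2) * y τ ^ (ε/2-1)
            ≤ C₂ * (2 * y τ) * (ε/2) * y τ ^ (ε/2-1) := step
          _ = ε * C₂ * (y τ ^ (ε/2-1) * y τ) := by ring
          _ = ε * C₂ * u τ := by rw [idB]
      calc (C₁ ε / ε * g1 τ + C₂ * g2 τ) * (ε/2) * y τ ^ (ε/2-1)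
          = C₁ ε / ε * g1 τ * (ε/2) * y τ ^ (ε/2-1)
            + C₂ * g2 τ * (ε/2) * y τ ^ (ε/2-1) := by ring
        _ ≤ E + ε * C₂ * u τ := add_le_add t1 t2
        _ = ε * C₂ * u τ + E := by ring
    have hy0 : y 0 = δ := by simp [hydef]
    have hu0le : u 0 ≤ δ ^ (ε/2) := by
      rw [hudef]; dsimp only; rw [hy0]
    have hgron := le_gronwallBound_of_liminf_deriv_right_le hucont hu' hu0le hbound
    have hut : u t ≤ (δ ^ (ε/2) + E * t) * Real.exp (ε * C₂ * t) := by
      have h1 := hgron t ht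
      rw [sub_zero] at h1
      exact h1.trans (gb_le hKnn (Real.rpow_nonneg hδ.le _) hE ht.1)
    have hytpos : 0 < y t := hypos t ht.1
    have hyt : y t = u t ^ (2/ε) := by
      rw [hudef]; dsimp only
      rw [← Real.rpow_mul hytpos.le, show ε/2 * (2/ε) = 1 by field_simp, Real.rpow_one]
    have hunn : 0 ≤ u t := Real.rpow_nonneg hytpos.le _
    have hsumnn : 0 ≤ δ ^ (ε/2) + E * t :=
      add_nonneg (Real.rpow_nonneg hδ.le _) (mul_nonneg hE ht.1)
    have h2 : u t ^ (2/ε) ≤ ((δ ^ (ε/2) + E*t) * Real.exp (ε*C₂*t)) ^ (2/ε) :=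
      Real.rpow_le_rpow hunn hut (by positivity)
    have h3 : ((δ ^ (ε/2) + E*t) * Real.exp (ε*C₂*t)) ^ (2/ε)
        = (δ ^ (ε/2) + E*t) ^ (2/ε) * Real.exp (2*C₂*t) := by
      rw [Real.mul_rpow hsumnn (Real.exp_nonneg _), ← Real.exp_mul]
      congr 1
      field_simp
    have hz2t : z t ^ 2 ≤ 2 * y t := by
      have h := hzy t ht; rwa [hζeq t ht] at h
    calc z t ^ 2 ≤ 2 * y t := hz2t
      _ = 2 * u t ^ (2/ε) := by rw [hyt]
      _ ≤ 2 * (((δ ^ (ε/2) + E*t) * Real.exp (ε*C₂*t)) ^ (2/ε)) := by linarith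
      _ = 2 * ((δ ^ (ε/2) + E*t) ^ (2/ε)) * Real.exp (2*C₂*t) := by rw [h3]; ring
  -- pass to the limit δ → 0⁺
  have hEt : 0 ≤ E * t := mul_nonneg hE ht.1
  have hlim : Filter.Tendsto
      (fun δ : ℝ => 2 * ((δ ^ (ε/2) + E * t) ^ (2/ε)) * Real.exp (2*C₂*t))
      (nhdsWithin 0 (Set.Ioi 0)) (nhds (2 * ((E*t) ^ (2/ε)) * Real.exp (2*C₂*t))) := by
    have t1 : Filter.Tendsto (fun δ : ℝ => δ ^ (ε/2)) (nhdsWithin 0 (Set.Ioi 0)) (nhds 0) := by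
      have hcont : ContinuousAt (fun δ : ℝ => δ ^ (ε/2)) 0 :=
        Real.continuousAt_rpow_const 0 (ε/2) (Or.inr (by positivity))
      have h0 : (0:ℝ) ^ (ε/2) = 0 := Real.zero_rpow (by positivity)
      exact (h0 ▸ hcont.tendsto).mono_left nhdsWithin_le_nhds
    have t2 : Filter.Tendsto (fun x : ℝ => 2 * ((x + E * t) ^ (2/ε)) * Real.exp (2*C₂*t))
        (nhds 0) (nhds (2 * ((E*t) ^ (2/ε)) * Real.exp (2*C₂*t))) := by
      have hadd : ContinuousAt (fun x : ℝ => x + E*t) 0 := by fun_prop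
      have hc : ContinuousAt (fun x : ℝ => (x + E * t) ^ (2/ε)) 0 :=
        hadd.rpow_const (Or.inr (by positivity))
      have h5 := (hc.const_mul (2:ℝ)).mul_const (Real.exp (2*C₂*t))
      simpa using h5.tendsto
    exact t2.comp t1
  have hle : z t ^ 2 ≤ 2 * ((E*t) ^ (2/ε)) * Real.exp (2*C₂*t) := by
    apply ge_of_tendsto hlim
    filter_upwards [self_mem_nhdsWithin] with δ hδ
    exact main δ hδ
  have hCt : 0 ≤ C₁ ε * t := mul_nonneg hC1 ht.1
  have hid : 2 * ((E*t) ^ (2/ε)) * Real.exp (2*C₂*t)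
      = ((C₁ ε * t) ^ (1/ε) * Real.exp (C₂*t)) ^ 2 := by
    have e1 : E * t = (C₁ ε * t) * 2 ^ (-(ε/2)) := by rw [hEdef]; ring
    have e2 : ((2:ℝ) ^ (-(ε/2))) ^ (2/ε) = 1/2 := by
      rw [← Real.rpow_mul (by norm_num : (0:ℝ) ≤ 2),
        show -(ε/2) * (2/ε) = -1 by field_simp, Real.rpow_neg_one]
      norm_num
    have e3 : ((C₁ ε * t) ^ (1/ε)) ^ 2 = (C₁ ε * t) ^ (2/ε) := by
      rw [← Real.rpow_natCast ((C₁ ε * t) ^ (1/ε)) 2, ← Real.rpow_mul hCt]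
      congr 1
      push_cast
      ring
    have e4 : Real.exp (C₂*t) ^ 2 = Real.exp (2*C₂*t) := by
      rw [sq, ← Real.exp_add]; ring_nf
    rw [e1, Real.mul_rpow hCt (Real.rpow_nonneg (by norm_num) _), e2, mul_pow, e3, e4]
    ring
  rw [hid] at hle
  have hR : 0 ≤ (C₁ ε * t) ^ (1/ε) * Real.exp (C₂*t) :=
    mul_nonneg (Real.rpow_nonneg hCt _) (Real.exp_nonneg _)
  nlinarith [hznn t ht, hle, hR]

lemma zero_small
    (T : ℝ) (C₂ C : ℝ) (C₁ : ℝ → ℝ)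
    (hC₁ : ∀ ε ∈ Set.Ioo (0 : ℝ) 1, 0 ≤ C₁ ε)
    (hC : ∀ ε ∈ Set.Ioo (0 : ℝ) 1, C₁ ε ≤ C)
    (z : ℝ → ℝ)
    (hznn : ∀ t ∈ Set.Icc (0 : ℝ) T, 0 ≤ z t)
    (hb : ∀ t ∈ Set.Icc (0 : ℝ) T, ∀ ε ∈ Set.Ioo (0 : ℝ) 1,
      z t ≤ (C₁ ε * t) ^ (1 / ε) * Real.exp (C₂ * t)) :
    ∀ t ∈ Set.Icc (0 : ℝ) T, C * t ≤ 1/2 → z t = 0 := by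
  intro t ht hCt
  have key : ∀ n : ℕ, z t ≤ (1/2 : ℝ) ^ (n+2) * Real.exp (C₂ * t) := by
    intro n
    set ε : ℝ := ((n:ℝ) + 2)⁻¹ with hεdef
    have hn2 : (0:ℝ) < (n:ℝ) + 2 := by positivity
    have hn2' : (1:ℝ) < (n:ℝ) + 2 := by
      have : (0:ℝ) ≤ (n:ℝ) := Nat.cast_nonneg n
      linarith
    have hε0 : 0 < ε := by positivity
    have hε1 : ε < 1 := by
      rw [hεdef]
      rw [inv_lt_one_iff₀]
      right; exact hn2'
    have hmem : ε ∈ Set.Ioo (0:ℝ) 1 := ⟨hε0, hε1⟩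
    have h1 := hb t ht ε hmem
    have hC1t : C₁ ε * t ≤ 1/2 :=
      le_trans (mul_le_mul_of_nonneg_right (hC ε hmem) ht.1) hCt
    have hC1tnn : 0 ≤ C₁ ε * t := mul_nonneg (hC₁ ε hmem) ht.1
    have h2 : (C₁ ε * t) ^ (1/ε) ≤ (1/2:ℝ) ^ (1/ε) :=
      Real.rpow_le_rpow hC1tnn hC1t (by positivity)
    have h3 : (1/ε : ℝ) = ((n+2 : ℕ) : ℝ) := by
      rw [hεdef, one_div, inv_inv]; push_cast; ring
    have h4 : (1/2:ℝ) ^ (1/ε) = (1/2:ℝ) ^ (n+2 : ℕ) := by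
      rw [h3, Real.rpow_natCast]
    calc z t ≤ (C₁ ε * t) ^ (1/ε) * Real.exp (C₂ * t) := h1
      _ ≤ (1/2:ℝ) ^ (1/ε) * Real.exp (C₂*t) :=
          mul_le_mul_of_nonneg_right h2 (Real.exp_nonneg _)
      _ = _ := by rw [h4]
  have hlim : Filter.Tendsto (fun n : ℕ => (1/2:ℝ)^(n+2) * Real.exp (C₂*t))
      Filter.atTop (nhds 0) := by
    have h1 : Filter.Tendsto (fun n : ℕ => (1/2:ℝ)^n) Filter.atTop (nhds 0) :=
      tendsto_pow_atTop_nhds_zero_of_lt_one (by norm_num) (by norm_num)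
    have h2 := (h1.comp (Filter.tendsto_add_atTop_nat 2)).mul_const (Real.exp (C₂*t))
    simpa using h2
  have hzt : z t ≤ 0 := ge_of_tendsto hlim (Filter.Eventually.of_forall key)
  exact le_antisymm hzt (hznn t ht)


/-- Let `T > 0`, `C₂ ≥ 0` and, for each `ε ∈ (0,1)`, a constant `C₁^ε ≥ 0`, with
`sup_{ε ∈ (0,1)} C₁^ε < ∞`. If `z : [0,T] → [0,∞)` is continuous and satisfies
`(1/2) z(t)² ≤ (C₁^ε/ε) ∫₀ᵗ z(s)^{2-ε} ds + C₂ ∫₀ᵗ z(s)² ds`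
for every `t ∈ [0,T]` and every `ε ∈ (0,1)`, then
`z(t) ≤ (C₁^ε t)^{1/ε} e^{C₂ t}` for all such `t` and `ε`, and consequently
`z ≡ 0` on `[0,T]`. -/
theorem yudovich_gronwall_iteration
    (T : ℝ) (hT : 0 < T) (C₂ : ℝ) (hC₂ : 0 ≤ C₂)
    (C₁ : ℝ → ℝ) (hC₁ : ∀ ε ∈ Set.Ioo (0 : ℝ) 1, 0 ≤ C₁ ε)
    (hC₁sup : BddAbove (C₁ '' Set.Ioo (0 : ℝ) 1))
    (z : ℝ → ℝ) (hzc : ContinuousOn z (Set.Icc 0 T))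
    (hznn : ∀ t ∈ Set.Icc (0 : ℝ) T, 0 ≤ z t)
    (hineq : ∀ t ∈ Set.Icc (0 : ℝ) T, ∀ ε ∈ Set.Ioo (0 : ℝ) 1,
      (1 / 2) * z t ^ 2
        ≤ (C₁ ε / ε) * (∫ s in (0 : ℝ)..t, z s ^ (2 - ε))
          + C₂ * ∫ s in (0 : ℝ)..t, z s ^ 2) :
    (∀ t ∈ Set.Icc (0 : ℝ) T, ∀ ε ∈ Set.Ioo (0 : ℝ) 1,
      z t ≤ (C₁ ε * t) ^ (1 / ε) * Real.exp (C₂ * t)) ∧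
    ∀ t ∈ Set.Icc (0 : ℝ) T, z t = 0 := by
  refine ⟨key_bound T hT C₂ hC₂ C₁ hC₁ z hzc hznn hineq, ?_⟩
  set C : ℝ := sSup (C₁ '' Set.Ioo 0 1) with hCdef
  have hCub : ∀ ε ∈ Set.Ioo (0:ℝ) 1, C₁ ε ≤ C := fun ε hε =>
    le_csSup hC₁sup ⟨ε, hε, rfl⟩
  have hC0 : 0 ≤ C :=
    le_trans (hC₁ (1/2) (by norm_num)) (hCub (1/2) (by norm_num))
  set b : ℝ := (2*(C+1))⁻¹ with hbdef
  have h2C : (0:ℝ) < 2*(C+1) := by positivity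
  have hb0 : 0 < b := by positivity
  have hCb : ∀ s : ℝ, 0 ≤ s → s ≤ b → C * s ≤ 1/2 := by
    intro s hs0 hsb
    have h1 : C * s ≤ C * b := mul_le_mul_of_nonneg_left hsb hC0
    have h2 : C * b ≤ 1/2 := by
      rw [hbdef, ← div_eq_mul_inv, div_le_iff₀ h2C]
      linarith
    linarith
  have hz0 : z 0 = 0 := by
    have h := hineq 0 ⟨le_refl 0, hT.le⟩ (1/2) (by norm_num)
    simp only [intervalIntegral.integral_same, mul_zero, add_zero] at h
    have h2 : z 0 ^ 2 = 0 := le_antisymm (by linarith) (sq_nonneg _)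
    exact pow_eq_zero_iff two_ne_zero |>.mp h2
  have claim : ∀ n : ℕ, ∀ t ∈ Set.Icc (0:ℝ) (min ((n:ℝ)*b) T), z t = 0 := by
    intro n
    induction n with
    | zero =>
      intro t ht
      have ht0 : t = 0 := by
        have h2 := ht.2
        simp only [Nat.cast_zero, zero_mul] at h2
        have : t ≤ 0 := le_trans h2 (min_le_left _ _)
        linarith [ht.1]
      rw [ht0]; exact hz0
    | succ n ih =>
      intro t ht
      by_cases hTa : T ≤ (n:ℝ)*b
      · exact ih t ⟨ht.1, by
          rw [min_eq_right hTa]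
          exact le_trans ht.2 (min_le_right _ _)⟩
      · push_neg at hTa
        set a : ℝ := (n:ℝ)*b with hadef
        have ha0 : 0 ≤ a := mul_nonneg (Nat.cast_nonneg n) hb0.le
        have hzeroa : ∀ s ∈ Set.Icc (0:ℝ) a, z s = 0 := by
          intro s hs
          exact ih s ⟨hs.1, le_min hs.2 (le_trans hs.2 hTa.le)⟩
        by_cases hta : t ≤ a
        · exact hzeroa t ⟨ht.1, hta⟩
        · push_neg at hta
          set T' : ℝ := T - a with hT'def
          have hT' : 0 < T' := by rw [hT'def]; linarith
          set w : ℝ → ℝ := fun s => z (a + s) with hwdef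
          have hwc : ContinuousOn w (Set.Icc 0 T') := by
            have hmap : Set.MapsTo (fun s : ℝ => a + s) (Set.Icc 0 T') (Set.Icc 0 T) := by
              intro s hs
              have h1 := hs.1
              have h2 := hs.2
              constructor
              · dsimp only
                linarith [ha0]
              · dsimp only
                linarith [hT'def.le, hT'def.ge]
            exact hzc.comp (by fun_prop) hmap
          have hwnn : ∀ s ∈ Set.Icc (0:ℝ) T', 0 ≤ w s := fun s hs =>
            hznn _ ⟨by linarith [hs.1, ha0], by linarith [hs.2, hT'def.le, hT'def.ge]⟩
          have hshift : ∀ p : ℝ → ℝ, ContinuousOn p (Set.Icc 0 T) →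
              (∀ s ∈ Set.Icc (0:ℝ) a, p s = 0) →
              ∀ s ∈ Set.Icc (0:ℝ) T',
                (∫ x in (0:ℝ)..(a+s), p x) = ∫ x in (0:ℝ)..s, p (a+x) := by
            intro p hp hp0 s hs
            have hint1 : IntervalIntegrable p MeasureTheory.volume 0 a := by
              apply (hp.mono _).intervalIntegrable
              rw [Set.uIcc_of_le ha0]
              exact Set.Icc_subset_Icc le_rfl (by linarith)
            have hint2 : IntervalIntegrable p MeasureTheory.volume a (a+s) := by
              apply (hp.mono _).intervalIntegrable
              rw [Set.uIcc_of_le (by linarith [hs.1] : a ≤ a + s)]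
              exact Set.Icc_subset_Icc ha0 (by linarith [hs.2, hT'def.le, hT'def.ge])
            have e0 : (∫ x in (0:ℝ)..a, p x) = 0 := by
              rw [show (∫ x in (0:ℝ)..a, p x) = ∫ x in (0:ℝ)..a, (0:ℝ) from
                intervalIntegral.integral_congr (fun x hx => by
                  rw [Set.uIcc_of_le ha0] at hx; exact hp0 x hx)]
              simp
            have esplit := intervalIntegral.integral_add_adjacent_intervals hint1 hint2
            have ecomp : (∫ x in (0:ℝ)..s, p (a+x)) = ∫ x in (a+0)..(a+s), p x :=
              intervalIntegral.integral_comp_add_left p a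
            rw [← esplit, e0, zero_add, ecomp, add_zero]
          have hwineq : ∀ s ∈ Set.Icc (0:ℝ) T', ∀ ε ∈ Set.Ioo (0:ℝ) 1,
              (1/2) * w s ^ 2
                ≤ (C₁ ε / ε) * (∫ x in (0:ℝ)..s, w x ^ (2-ε))
                  + C₂ * ∫ x in (0:ℝ)..s, w x ^ 2 := by
            intro s hs ε hε
            have hmemas : a + s ∈ Set.Icc (0:ℝ) T :=
              ⟨by linarith [hs.1, ha0], by linarith [hs.2, hT'def.le, hT'def.ge]⟩
            have h := hineq (a+s) hmemas ε hε
            have e1 := hshift (fun x => z x ^ (2-ε))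
              (hzc.rpow_const (fun x _ => Or.inr (by linarith [hε.2])))
              (fun x hx => by
                show z x ^ (2-ε) = 0
                rw [hzeroa x hx, Real.zero_rpow (by linarith [hε.2])])
              s hs
            have e2 := hshift (fun x => z x ^ 2)
              (hzc.pow 2)
              (fun x hx => by
                show z x ^ 2 = 0
                rw [hzeroa x hx]; ring)
              s hs
            rw [e1, e2] at h
            exact h
          have hwbound := key_bound T' hT' C₂ hC₂ C₁ hC₁ w hwc hwnn hwineq
          have hwzero := zero_small T' C₂ C C₁ hC₁ hCub w hwnn hwbound
          have htT : t ≤ T := le_trans ht.2 (min_le_right _ _)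
          have htnb : t ≤ ((n:ℝ)+1)*b := by
            have := le_trans ht.2 (min_le_left _ _)
            push_cast at this
            linarith
          have hsT' : t - a ∈ Set.Icc (0:ℝ) T' := ⟨by linarith, by rw [hT'def]; linarith⟩
          have htb : t - a ≤ b := by rw [hadef] at *; linarith
          have hCs : C * (t-a) ≤ 1/2 := hCb (t-a) (by linarith) htb
          have hw0 := hwzero (t-a) hsT' hCs
          rw [hwdef] at hw0
          simpa using hw0
  obtain ⟨n, hn⟩ := exists_nat_ge (T / b)
  intro t ht
  have hTn : T ≤ (n:ℝ)*b := by
    rw [div_le_iff₀ hb0] at hn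
    linarith
  exact claim n t ⟨ht.1, by rw [min_eq_right hTn]; exact ht.2⟩
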